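/- arXiv:1102.0686 — 4 statements merged into one kernel-verified Lean document; each statement's English description precedes it below -/
import Mathlib

section
/- If A : 2^{<ω} → ℕ is upper semicomputable and there exists a constant d with |{x : A(x) ≤ n}| ≤ 2^{n+d} for all n, then C(x) ≤ A(x) + O(1). -/
open Set Filter

namespace KC

/-- Length of the binary string identified with the natural number `n`. -/
def len (n : ℕ) : ℕ := Nat.log 2 (n + 1)

/-- Complexity of `x` relative to machine `T`. -/
noncomputable def MachineCplx (T : ℕ →. ℕ) (x : ℕ) : ℕ := sInf {n | ∃ y, len y = n ∧ x ∈ T y}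

/-- `U` is an optimal machine. -/
def Optimal (U : ℕ →. ℕ) : Prop :=
  Partrec U ∧ ∀ T : ℕ →. ℕ, Partrec T → ∃ c, ∀ x y, x ∈ T y → MachineCplx U x ≤ len y + c

/-- Conditional complexity of `x` given `y` relative to machine `T`. -/
noncomputable def CondCplx (T : ℕ →. ℕ) (x y : ℕ) : ℕ :=
  sInf {n | ∃ z, len z = n ∧ x ∈ T (Nat.pair z y)}

/-- `U` is optimal as a conditional machine. -/
def CondOptimal (U : ℕ →. ℕ) : Prop :=
  Partrec U ∧ ∀ T : ℕ →. ℕ, Partrec T →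
    ∃ c, ∀ x y z, x ∈ T (Nat.pair z y) → CondCplx U x y ≤ len z + c

/-- `y` is a prefix of `z` (as binary strings identified with naturals). -/
def IsPrefix (y z : ℕ) : Prop := ∃ k, (y + 1) * 2 ^ k ≤ z + 1 ∧ z + 1 < (y + 2) * 2 ^ k

/-- A machine with prefix-free domain. -/
def PrefixFree (T : ℕ →. ℕ) : Prop :=
  ∀ y z, (T y).Dom → (T z).Dom → IsPrefix y z → y = z

/-- `U` is an optimal prefix-free machine. -/
def PrefixOptimal (U : ℕ →. ℕ) : Prop :=
  Partrec U ∧ PrefixFree U ∧ ∀ T : ℕ →. ℕ, Partrec T → PrefixFree T →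
    ∃ c, ∀ x y, x ∈ T y → MachineCplx U x ≤ len y + c

/-- Upper semicomputability: `A` is a pointwise limit of a computable
nonincreasing sequence of approximations. -/
def UpperSemicomputable (A : ℕ → ℕ) : Prop :=
  ∃ F : ℕ → ℕ → ℕ, Computable₂ F ∧ (∀ x, Antitone (F x)) ∧ ∀ x, A x = ⨅ s, F x s

/-- Uniform upper semicomputability for a two-argument function. -/
def UpperSemicomputable₂ (B : ℕ → ℕ → ℕ) : Prop :=
  UpperSemicomputable (fun p => B (Nat.unpair p).1 (Nat.unpair p).2)

/-- Solovay's function `α` built from a complexity function `K`. -/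
noncomputable def solovay (K : ℕ → ℕ) (n : ℕ) : ℕ := sInf {m | ∃ i, n < i ∧ K i = m}

/-- An order: total, non-decreasing, unbounded. -/
def IsOrder (h : ℕ → ℕ) : Prop := Monotone h ∧ ∀ m, ∃ n, m ≤ h n

/-- Sub-linearity: `f n = o(n)`. -/
def Sublinear (f : ℕ → ℕ) : Prop :=
  Tendsto (fun n => (f n : ℝ) / n) atTop (nhds 0)

/-- `p_f = max {n | f n ≥ n}`. -/
noncomputable def pstar (f : ℕ → ℕ) : ℕ := sSup {n | n ≤ f n}

/-- The star-operator: `f* n = min {k | f^[k] n ≤ p_f}`. -/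
noncomputable def starOp (f : ℕ → ℕ) (n : ℕ) : ℕ := sInf {k | f^[k] n ≤ pstar f}

end KC

/-! The sublevel sets `{x | A x ≤ n}` are enumerable uniformly in `n`, and the `n`-th one has at
most `2 ^ (n + d)` elements. A machine that reads a string `y` of length `n + d` as an index
`i < 2 ^ (n + d)` and outputs the `i`-th distinct element enumerated into the `n`-th sublevel set
describes every `x` with `A x ≤ n` by a string of length `n + d`; optimality of `U` then costs
only an additive constant. -/

namespace KC

open Computable

theorem computable₂_countP_range {α : Type*} [Primcodable α] {b : α → ℕ → Bool}
    (hb : Computable₂ b) : Computable₂ fun a n => (List.range n).countP (b a) := by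
  have step : Computable₂ fun (a : α × ℕ) (q : ℕ × ℕ) => q.2 + cond (b a.1 q.1) 1 0 :=
    ((Primrec₂.to_comp Primrec.nat_add).comp (snd.comp snd)
      (Computable.cond (hb.comp (fst.comp fst) (fst.comp snd)) (const 1) (const 0))).to₂
  refine (Computable.nat_rec snd (const 0) step).of_eq fun a => ?_
  induction a.2 with
  | zero => rfl
  | succ n ih =>
    simp only [ih, List.range_succ, List.countP_append, List.countP_singleton]
    cases b a.1 n <;> rfl

theorem computable₂_pow : Computable₂ ((· ^ ·) : ℕ → ℕ → ℕ) :=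
  Primrec₂.to_comp (Primrec₂.unpaired'.mp Nat.Primrec.pow)

theorem countP_range_lt (m k : ℕ) :
    (List.range m).countP (fun t => decide (t < k)) = min m k := by
  induction m with
  | zero => simp
  | succ m ih =>
    rw [List.range_succ, List.countP_append, ih, List.countP_singleton]
    split_ifs with h <;> simp at h <;> omega

theorem len_eq_countP (y : ℕ) :
    len y = (List.range (y + 1)).countP fun t => decide (2 ^ (t + 1) ≤ y + 1) := by
  have h : ∀ t, 2 ^ (t + 1) ≤ y + 1 ↔ t < len y := fun t =>
    (Nat.le_log_iff_pow_le one_lt_two (Nat.succ_ne_zero y)).symm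
  simp_rw [h, countP_range_lt]
  exact (min_eq_right (Nat.log_le_self 2 (y + 1))).symm

theorem computable_len : Computable len := by
  have hb : Computable₂ fun y t : ℕ => decide (2 ^ (t + 1) ≤ y + 1) :=
    (Primrec₂.to_comp Primrec.nat_le.decide).comp
      (computable₂_pow.comp (const 2) (succ.comp snd)) (succ.comp fst)
  exact ((computable₂_countP_range hb).comp Computable.id succ).of_eq fun y =>
    (len_eq_countP y).symm

theorem len_two_pow_sub_one_add {ℓ i : ℕ} (hi : i < 2 ^ ℓ) : len (2 ^ ℓ - 1 + i) = ℓ := by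
  have := Nat.one_le_two_pow (n := ℓ)
  exact Nat.log_eq_of_pow_le_of_lt_pow (by omega) (by rw [pow_succ]; omega)

section Enumeration

variable (e : ℕ → ℕ → Option ℕ)

def enumSet (n : ℕ) : Set ℕ := {x | ∃ p, e n p = some x}

def isNew (n p : ℕ) : Bool :=
  (e n p).isSome && decide ((List.range p).countP (fun q => decide (e n q = e n p)) = 0)

def rank (n p : ℕ) : ℕ := (List.range p).countP (isNew e n)

def nthNew (n i : ℕ) : Part ℕ :=
  (Nat.rfind fun p => Part.some (isNew e n p && decide (rank e n p = i))).bind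
    fun p => (e n p : Part ℕ)

/-- A string `y` of length `ℓ` is read as the index `y + 1 - 2 ^ ℓ < 2 ^ ℓ` into the elements
enumerated at level `ℓ - d`. -/
def countingMachine (d : ℕ) : ℕ →. ℕ := fun y => nthNew e (len y - d) (y + 1 - 2 ^ len y)

variable {e}

theorem computable₂_isNew (he : Computable₂ e) : Computable₂ (isNew e) := by
  have hc : Computable₂ fun (a : ℕ × ℕ) (q : ℕ) => decide (e a.1 q = e a.1 a.2) :=
    (Primrec₂.to_comp Primrec.eq.decide).comp (he.comp (fst.comp fst) snd)
      (he.comp (fst.comp fst) (snd.comp fst))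
  exact ((Primrec₂.to_comp Primrec.and).comp (Primrec.option_isSome.to_comp.comp he)
    ((Primrec₂.to_comp Primrec.eq.decide).comp
      ((computable₂_countP_range hc).comp Computable.id snd) (const 0))).to₂

theorem computable₂_rank (he : Computable₂ e) : Computable₂ (rank e) :=
  computable₂_countP_range (computable₂_isNew he)

theorem partrec₂_nthNew (he : Computable₂ e) : Partrec₂ (nthNew e) := by
  have hsearch : Computable₂ fun (a : ℕ × ℕ) (p : ℕ) =>
      (isNew e a.1 p && decide (rank e a.1 p = a.2)) :=
    (Primrec₂.to_comp Primrec.and).comp ((computable₂_isNew he).comp (fst.comp fst) snd)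
      ((Primrec₂.to_comp Primrec.eq.decide).comp
        ((computable₂_rank he).comp (fst.comp fst) snd) (snd.comp fst))
  exact (Partrec.rfind hsearch.partrec₂).bind
    (Computable.ofOption (he.comp (fst.comp fst) snd)).to₂

theorem partrec_countingMachine (he : Computable₂ e) (d : ℕ) :
    Partrec (countingMachine e d) :=
  (partrec₂_nthNew he).comp
    ((Primrec₂.to_comp Primrec.nat_sub).comp computable_len (const d))
    ((Primrec₂.to_comp Primrec.nat_sub).comp succ
      (computable₂_pow.comp (const 2) computable_len))

variable {n : ℕ}

theorem isNew_iff {p : ℕ} : isNew e n p ↔ (e n p).isSome ∧ ∀ q < p, e n q ≠ e n p := by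
  simp [isNew, List.countP_eq_zero]

theorem injOn_isNew : Set.InjOn (e n) {p | isNew e n p} := by
  intro p hp q hq hpq
  by_contra hne
  rcases Nat.lt_or_gt_of_ne hne with h | h
  · exact (isNew_iff.1 hq).2 p h hpq
  · exact (isNew_iff.1 hp).2 q h hpq.symm

theorem exists_isNew {x : ℕ} (hx : x ∈ enumSet e n) :
    ∃ p, isNew e n p ∧ e n p = some x := by
  have hfind := Nat.find_spec hx
  refine ⟨Nat.find hx, isNew_iff.2 ⟨by simp [hfind], fun q hq => ?_⟩, hfind⟩
  rw [hfind]
  exact Nat.find_min hx hq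

theorem rank_mono : Monotone (rank e n) := fun _ _ h => (List.range_sublist.2 h).countP_le

theorem rank_succ_of_isNew {p : ℕ} (hp : isNew e n p) : rank e n (p + 1) = rank e n p + 1 := by
  simp [rank, List.range_succ, hp]

theorem rank_lt_rank {p q : ℕ} (hp : isNew e n p) (hpq : p < q) : rank e n p < rank e n q :=
  (rank_succ_of_isNew hp ▸ rank_mono hpq : rank e n p + 1 ≤ rank e n q)

theorem rank_eq_card (p : ℕ) : rank e n p = ((Finset.range p).filter (isNew e n ·)).card := by
  rw [rank, List.countP_eq_length_filter,
    ← List.toFinset_card_of_nodup (List.nodup_range.filter _)]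
  simp [List.toFinset_filter, List.toFinset_range]

theorem rank_lt_ncard (hfin : (enumSet e n).Finite) {p : ℕ} (hp : isNew e n p) :
    rank e n p < (enumSet e n).ncard := by
  have hmaps : ∀ q ∈ ((Finset.range (p + 1)).filter (isNew e n ·) : Set ℕ),
      e n q ∈ Option.some '' enumSet e n := by
    intro q hq
    obtain ⟨x, hx⟩ := Option.isSome_iff_exists.1 (isNew_iff.1 (Finset.mem_filter.1 hq).2).1
    exact ⟨x, ⟨q, hx⟩, hx.symm⟩
  have hinj : Set.InjOn (e n) ((Finset.range (p + 1)).filter (isNew e n ·) : Set ℕ) :=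
    injOn_isNew.mono fun q hq => (Finset.mem_filter.1 hq).2
  calc rank e n p < rank e n (p + 1) := rank_lt_rank hp p.lt_succ_self
    _ = ((Finset.range (p + 1)).filter (isNew e n ·) : Set ℕ).ncard := by
      rw [rank_eq_card, Set.ncard_coe_finset]
    _ ≤ (Option.some '' enumSet e n).ncard :=
      Set.ncard_le_ncard_of_injOn _ hmaps hinj (hfin.image _)
    _ = (enumSet e n).ncard := Set.ncard_image_of_injective _ (Option.some_injective ℕ)

theorem mem_nthNew {p x : ℕ} (hp : isNew e n p) (hx : e n p = some x) :
    x ∈ nthNew e n (rank e n p) := by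
  refine Part.mem_bind_iff.2
    ⟨p, Nat.mem_rfind.2 ⟨by simp [hp], fun {m} hm => ?_⟩, by simp [hx]⟩
  cases hm' : isNew e n m
  · simp
  · simp [(rank_lt_rank hm' hm).ne]

theorem exists_mem_countingMachine {d x : ℕ} (hfin : (enumSet e n).Finite)
    (hcard : (enumSet e n).ncard ≤ 2 ^ (n + d)) (hx : x ∈ enumSet e n) :
    ∃ y, len y = n + d ∧ x ∈ countingMachine e d y := by
  obtain ⟨p, hp, hpx⟩ := exists_isNew hx
  have hi : rank e n p < 2 ^ (n + d) := (rank_lt_ncard hfin hp).trans_le hcard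
  have hlen := len_two_pow_sub_one_add hi
  have hindex : 2 ^ (n + d) - 1 + rank e n p + 1 - 2 ^ (n + d) = rank e n p := by
    have := Nat.one_le_two_pow (n := n + d)
    omega
  refine ⟨_, hlen, ?_⟩
  simp only [countingMachine, hlen, Nat.add_sub_cancel, hindex]
  exact mem_nthNew hp hpx

theorem Optimal.exists_machineCplx_le {U : ℕ →. ℕ} (hU : Optimal U) (he : Computable₂ e)
    {d : ℕ} (hcard : ∀ n, (enumSet e n).Finite ∧ (enumSet e n).ncard ≤ 2 ^ (n + d)) :
    ∃ c, ∀ n, ∀ x ∈ enumSet e n, MachineCplx U x ≤ n + c := by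
  obtain ⟨c, hc⟩ := hU.2 _ (partrec_countingMachine he d)
  refine ⟨d + c, fun n x hx => ?_⟩
  obtain ⟨y, hy, hxy⟩ := exists_mem_countingMachine (hcard n).1 (hcard n).2 hx
  have := hc x y hxy
  omega

end Enumeration

theorem UpperSemicomputable.exists_enumSet_eq {A : ℕ → ℕ} (hA : UpperSemicomputable A) :
    ∃ e : ℕ → ℕ → Option ℕ, Computable₂ e ∧
      ∀ n, enumSet e n = {x | A x ≤ n} := by
  obtain ⟨F, hF, -, hAF⟩ := hA
  let e : ℕ → ℕ → Option ℕ := fun n p =>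
    if F p.unpair.1 p.unpair.2 ≤ n then some p.unpair.1 else none
  have he : Computable₂ e := by
    have hx : Computable fun q : ℕ × ℕ => q.2.unpair.1 :=
      fst.comp (Primrec.unpair.to_comp.comp snd)
    have hs : Computable fun q : ℕ × ℕ => q.2.unpair.2 :=
      snd.comp (Primrec.unpair.to_comp.comp snd)
    exact (Computable.cond
      ((Primrec₂.to_comp Primrec.nat_le.decide).comp (hF.comp hx hs) fst)
      (option_some.comp hx) (const none)).to₂.of_eq fun q => by simp [e, Bool.cond_decide]
  refine ⟨e, he, fun n => Set.ext fun x => ?_⟩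
  have hle : A x ≤ n ↔ ∃ s, F x s ≤ n := by
    obtain ⟨s, hs⟩ := ciInf_mem (F x)
    rw [hAF]
    exact ⟨fun h => ⟨s, hs ▸ h⟩,
      fun ⟨t, ht⟩ => (ciInf_le (OrderBot.bddBelow _) t).trans ht⟩
  change (∃ p, e n p = some x) ↔ A x ≤ n
  rw [hle]
  constructor
  · rintro ⟨p, hp⟩
    simp only [e, Option.ite_none_right_eq_some, Option.some.injEq] at hp
    obtain ⟨h, rfl⟩ := hp
    exact ⟨_, h⟩
  · rintro ⟨s, hs⟩
    exact ⟨Nat.pair x s, by simp [e, hs]⟩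

end KC

open KC

theorem C_le_of_usc_counting (U : ℕ →. ℕ) (hU : Optimal U) (A : ℕ → ℕ)
    (h1 : UpperSemicomputable A)
    (h4 : ∃ d, ∀ n, {x | A x ≤ n}.Finite ∧ {x | A x ≤ n}.ncard ≤ 2 ^ (n + d)) :
    ∃ c, ∀ x, MachineCplx U x ≤ A x + c := by
  obtain ⟨e, he, hset⟩ := h1.exists_enumSet_eq
  obtain ⟨d, hd⟩ := h4
  obtain ⟨c, hc⟩ := hU.exists_machineCplx_le he (d := d) fun n => hset n ▸ hd n
  exact ⟨c, fun x => hc (A x) x (by simp [hset])⟩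
end

section
/- There exists a function A : 2^{<ω} → ℕ which is upper semicomputable, satisfies A(f(x)) ≤ A(x) + c_f for every total computable function f, satisfies A(x) ≤ |x| + O(1) and |{x : A(x) ≤ n}| = O(2^n), yet |A(x) − C(x)| is unbounded. -/
open Set Filter

/-!
`MachineCplx U x` is `0` when `x` has no `U`-program, so optimality of `U` is used only through
`C_U ≤ C + O(1)`, where `C` is the complexity for a universal machine `V` constructed here.

Put `A = max C (2α)`, where `α x = min {C i | i > x}` is Solovay's function of `C`. Since
`α x ≤ C (2 ^ (|x| + 1) - 1) = O(log |x|)`, `A x ≤ |x| + O(1)`, and `A ≥ C` gives the counting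
bound. A computable monotone majorant of a total computable `f` carries any `i > x` beyond `f x`
at constant cost, so `α`, like `C`, is stable. Finally, if `x` is the largest number with
`C x ≤ j`, then `C i > j` for every `i > x`, so `A x ≥ 2 j + 2` while `C x ≤ j`.
-/

namespace KC

open Nat.Partrec (Code)
open Nat.Partrec.Code

theorem pow_len_le (y : ℕ) : 2 ^ len y ≤ y + 1 :=
  Nat.pow_log_le_self 2 y.succ_ne_zero

theorem lt_pow_len (y : ℕ) : y + 1 < 2 ^ (len y + 1) :=
  Nat.lt_pow_succ_log_self one_lt_two _

theorem len_le_iff {y n : ℕ} : len y ≤ n ↔ y + 1 < 2 ^ (n + 1) :=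
  Nat.lt_succ_iff.symm.trans (Nat.log_lt_iff_lt_pow one_lt_two y.succ_ne_zero)

theorem two_mul_le_two_pow (k : ℕ) : 2 * k ≤ 2 ^ k := by
  induction k with
  | zero => simp
  | succ k ih =>
    have := Nat.one_le_two_pow (n := k)
    rw [pow_succ]
    omega

theorem two_mul_len_le (m : ℕ) : 2 * len m ≤ m + 1 :=
  (two_mul_le_two_pow _).trans (pow_len_le m)

theorem primrec_pow : Primrec₂ ((· ^ ·) : ℕ → ℕ → ℕ) :=
  Primrec₂.unpaired'.1 Nat.Primrec.pow

theorem primrec_len : Primrec len := by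
  have hrel : PrimrecRel fun y k : ℕ => 2 ^ k ≤ y + 1 :=
    Primrec.nat_le.comp (primrec_pow.comp (Primrec.const 2) Primrec.snd)
      (Primrec.succ.comp Primrec.fst)
  refine (Primrec.nat_findGreatest Primrec.id hrel).of_eq fun y => ?_
  rw [Nat.findGreatest_eq_iff]
  refine ⟨?_, fun _ => pow_len_le y, fun k hk _ hpow => ?_⟩
  · exact Nat.lt_succ_iff.mp ((len y).lt_two_pow_self.trans_le (pow_len_le y))
  · exact absurd (Nat.le_log_of_pow_le one_lt_two hpow) (by unfold len at hk; omega)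

/-- In binary, `enc e p` is `p` followed by `0` and `e` ones, so `e` is the 2-adic valuation of
`enc e p + 1`. -/
def enc (e p : ℕ) : ℕ := 2 ^ e * (2 * p + 1) - 1

theorem enc_add_one (e p : ℕ) : enc e p + 1 = 2 ^ e * (2 * p + 1) :=
  Nat.sub_add_cancel (Nat.one_le_iff_ne_zero.mpr (by positivity))

theorem len_enc_le (e p : ℕ) : len (enc e p) ≤ len p + e + 1 := by
  rw [len_le_iff, enc_add_one]
  calc 2 ^ e * (2 * p + 1) < 2 ^ e * (2 * 2 ^ (len p + 1)) := by
        have := lt_pow_len p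
        gcongr; omega
    _ = 2 ^ (len p + e + 1 + 1) := by ring

def decodeIndex (y : ℕ) : ℕ := Nat.findGreatest (fun e => (y + 1) % 2 ^ e = 0) (y + 1)

def decodeInput (y : ℕ) : ℕ := (y + 1) / 2 ^ (decodeIndex y + 1)

theorem decodeIndex_enc (e p : ℕ) : decodeIndex (enc e p) = e := by
  unfold decodeIndex
  rw [enc_add_one, Nat.findGreatest_eq_iff]
  refine ⟨?_, fun _ => Nat.mul_mod_right _ _, fun n hn _ hdvd => ?_⟩
  · exact e.lt_two_pow_self.le.trans (Nat.le_mul_of_pos_right _ (by omega))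
  · have h2 : 2 ^ e * 2 ∣ 2 ^ e * (2 * p + 1) :=
      (pow_succ 2 e ▸ pow_dvd_pow 2 hn).trans (Nat.dvd_of_mod_eq_zero hdvd)
    have := (Nat.mul_dvd_mul_iff_left (by positivity)).mp h2
    omega

theorem decodeInput_enc (e p : ℕ) : decodeInput (enc e p) = p := by
  unfold decodeInput
  rw [decodeIndex_enc, enc_add_one]
  apply Nat.div_eq_of_lt_le <;> rw [pow_succ] <;> nlinarith [Nat.one_le_two_pow (n := e)]

theorem primrec_decodeIndex : Primrec decodeIndex :=
  Primrec.nat_findGreatest Primrec.succ <|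
    Primrec.eq.comp (Primrec.nat_mod.comp (Primrec.succ.comp Primrec.fst)
      (primrec_pow.comp (Primrec.const 2) Primrec.snd)) (Primrec.const 0)

theorem primrec_decodeInput : Primrec decodeInput :=
  Primrec.nat_div.comp Primrec.succ
    (primrec_pow.comp (Primrec.const 2) (Primrec.succ.comp primrec_decodeIndex))

/-- The universal machine: program `enc e p` runs the `e`-th code on input `p`. -/
def V : ℕ →. ℕ := fun y => eval (Denumerable.ofNat Code (decodeIndex y)) (decodeInput y)

def Vstage (k y : ℕ) : Option ℕ :=
  evaln k (Denumerable.ofNat Code (decodeIndex y)) (decodeInput y)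

theorem partrec_V : Partrec V :=
  eval_part.comp ((Computable.ofNat Code).comp primrec_decodeIndex.to_comp)
    primrec_decodeInput.to_comp

theorem primrec_Vstage : Primrec₂ Vstage :=
  primrec_evaln.comp <| (Primrec.fst.pair ((Primrec.ofNat Code).comp
    (primrec_decodeIndex.comp Primrec.snd))).pair (primrec_decodeInput.comp Primrec.snd)

theorem mem_V_of_mem_Vstage {k y x : ℕ} (h : x ∈ Vstage k y) : x ∈ V y :=
  evaln_sound h

theorem exists_mem_Vstage {y x : ℕ} (h : x ∈ V y) : ∃ k, x ∈ Vstage k y :=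
  evaln_complete.mp h

theorem Vstage_mono {k k' y x : ℕ} (h : k ≤ k') (hx : x ∈ Vstage k y) : x ∈ Vstage k' y :=
  evaln_mono h hx

theorem V_enc (c : Code) (p : ℕ) : V (enc (Encodable.encode c) p) = eval c p := by
  rw [V, decodeIndex_enc, decodeInput_enc, Denumerable.ofNat_encode]

theorem exists_V_enc_eq {g : ℕ →. ℕ} (hg : Partrec g) : ∃ e, ∀ p, V (enc e p) = g p := by
  obtain ⟨c, rfl⟩ := exists_code.1 (Partrec.nat_iff.1 hg)
  exact ⟨Encodable.encode c, V_enc c⟩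

section Machine

variable {T : ℕ →. ℕ} {x y : ℕ}

theorem machineCplx_le (h : x ∈ T y) : MachineCplx T x ≤ len y :=
  Nat.sInf_le ⟨y, rfl, h⟩

theorem exists_len_eq_machineCplx (h : x ∈ T y) : ∃ z, len z = MachineCplx T x ∧ x ∈ T z :=
  Nat.sInf_mem (s := {n | ∃ y, len y = n ∧ x ∈ T y}) ⟨_, y, rfl, h⟩

def shortOutputs (T : ℕ →. ℕ) (n : ℕ) : Set ℕ := {x | ∃ y, len y ≤ n ∧ x ∈ T y}

theorem shortOutputs_subset_image (T : ℕ →. ℕ) [∀ y, Decidable (T y).Dom] (n : ℕ) :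
    shortOutputs T n ⊆ (fun y => (T y).getOrElse 0) '' Iio (2 ^ (n + 1)) := by
  rintro x ⟨y, hy, hdom, rfl⟩
  refine ⟨y, ?_, Part.getOrElse_of_dom _ hdom 0⟩
  have := len_le_iff.mp hy
  simp only [mem_Iio]
  omega

theorem finite_shortOutputs (T : ℕ →. ℕ) (n : ℕ) : (shortOutputs T n).Finite := by
  classical
  exact ((finite_Iio _).image _).subset (shortOutputs_subset_image T n)

theorem ncard_shortOutputs_le (T : ℕ →. ℕ) (n : ℕ) :
    (shortOutputs T n).ncard ≤ 2 ^ (n + 1) := by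
  classical
  calc (shortOutputs T n).ncard
      ≤ ((fun y => (T y).getOrElse 0) '' Iio (2 ^ (n + 1))).ncard :=
        ncard_le_ncard (shortOutputs_subset_image T n) ((finite_Iio _).image _)
    _ ≤ (Iio (2 ^ (n + 1))).ncard := ncard_image_le (finite_Iio _)
    _ = 2 ^ (n + 1) := by simp

theorem Optimal.exists_machineCplx_le_s9 {U : ℕ →. ℕ} (hU : Optimal U) (hT : Partrec T)
    (hsurj : ∀ x, ∃ y, x ∈ T y) : ∃ c, ∀ x, MachineCplx U x ≤ MachineCplx T x + c := by
  obtain ⟨c, hc⟩ := hU.2 T hT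
  refine ⟨c, fun x => ?_⟩
  obtain ⟨y, hy⟩ := hsurj x
  obtain ⟨z, hz, hxz⟩ := exists_len_eq_machineCplx hy
  exact hz ▸ hc x z hxz

end Machine

def StableUnderComputable (K : ℕ → ℕ) : Prop :=
  ∀ f : ℕ → ℕ, Computable f → ∃ c, ∀ x, K (f x) ≤ K x + c

section MachineV

theorem exists_mem_V_enc : ∃ e, ∀ x, x ∈ V (enc e x) := by
  obtain ⟨e, he⟩ := exists_V_enc_eq (Computable.id (α := ℕ)).partrec
  exact ⟨e, fun x => by simp [he, PFun.coe_val]⟩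

theorem exists_machineCplx_V_le_len : ∃ c, ∀ x, MachineCplx V x ≤ len x + c := by
  obtain ⟨e, he⟩ := exists_mem_V_enc
  exact ⟨e + 1, fun x => (machineCplx_le (he x)).trans (len_enc_le e x)⟩

theorem exists_mem_V (x : ℕ) : ∃ y, x ∈ V y :=
  exists_mem_V_enc.elim fun _ he => ⟨_, he x⟩

theorem exists_len_eq_machineCplx_V (x : ℕ) : ∃ y, len y = MachineCplx V x ∧ x ∈ V y :=
  (exists_mem_V x).elim fun _ hy => exists_len_eq_machineCplx hy

theorem stableUnderComputable_machineCplx_V : StableUnderComputable (MachineCplx V) := by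
  intro f hf
  obtain ⟨e, he⟩ := exists_V_enc_eq (partrec_V.map (hf.comp Computable.snd).to₂)
  refine ⟨e + 1, fun x => ?_⟩
  obtain ⟨y, hy, hxy⟩ := exists_len_eq_machineCplx_V x
  have hfx : f x ∈ V (enc e y) := by rw [he]; exact Part.mem_map f hxy
  calc MachineCplx V (f x) ≤ len (enc e y) := machineCplx_le hfx
    _ ≤ MachineCplx V x + (e + 1) := by have := len_enc_le e y; omega

theorem setOf_machineCplx_V_le_subset (n : ℕ) :
    {x | MachineCplx V x ≤ n} ⊆ shortOutputs V n := fun x hx => by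
  obtain ⟨y, hy, hxy⟩ := exists_len_eq_machineCplx_V x
  exact ⟨y, hy.trans_le hx, hxy⟩

end MachineV

theorem exists_monotone_computable_le {f : ℕ → ℕ} (hf : Computable f) :
    ∃ G : ℕ → ℕ, Computable G ∧ Monotone G ∧ ∀ n, f n ≤ G n := by
  let G : ℕ → ℕ := fun n => Nat.rec (f 0) (fun k m => max m (f (k + 1))) n
  refine ⟨G, ?_, monotone_nat_of_le_succ fun n => le_max_left _ _, ?_⟩
  · exact Computable.nat_rec Computable.id (Computable.const (f 0))
      ((Primrec.nat_max.to_comp.comp (Computable.snd.comp Computable.snd)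
        (hf.comp (Computable.succ.comp (Computable.fst.comp Computable.snd)))).to₂)
  · rintro (_ | n)
    · exact le_rfl
    · exact le_max_right _ _

section Solovay

variable {K : ℕ → ℕ}

theorem solovay_le {n i : ℕ} (h : n < i) : solovay K n ≤ K i :=
  Nat.sInf_le ⟨i, h, rfl⟩

theorem exists_lt_and_eq_solovay (K : ℕ → ℕ) (n : ℕ) : ∃ i, n < i ∧ K i = solovay K n :=
  Nat.sInf_mem (s := {m | ∃ i, n < i ∧ K i = m}) ⟨K (n + 1), n + 1, n.lt_succ_self, rfl⟩

theorem stableUnderComputable_solovay (hK : StableUnderComputable K) :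
    StableUnderComputable (solovay K) := by
  intro f hf
  obtain ⟨G, hG, hGmono, hfG⟩ := exists_monotone_computable_le hf
  obtain ⟨c, hc⟩ := hK _ (Computable.succ.comp hG)
  refine ⟨c, fun x => ?_⟩
  obtain ⟨i, hxi, hi⟩ := exists_lt_and_eq_solovay K x
  have hlt : f x < G i + 1 := Nat.lt_succ_of_le ((hfG x).trans (hGmono hxi.le))
  exact (solovay_le hlt).trans (hi ▸ hc i)

theorem StableUnderComputable.exists_two_mul_solovay_le_len (hK : StableUnderComputable K)
    (hlen : ∃ c, ∀ x, K x ≤ len x + c) : ∃ c, ∀ x, 2 * solovay K x ≤ len x + c := by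
  obtain ⟨c₁, hc₁⟩ := hK (fun m => 2 ^ m - 1)
    (Primrec.nat_sub.comp (primrec_pow.comp (Primrec.const 2) Primrec.id)
      (Primrec.const 1)).to_comp
  obtain ⟨c₂, hc₂⟩ := hlen
  refine ⟨2 * (c₁ + c₂) + 2, fun x => ?_⟩
  have hx : x < 2 ^ (len x + 1) - 1 := by have := lt_pow_len x; omega
  have h := (solovay_le (K := K) hx).trans ((hc₁ (len x + 1)).trans
    (Nat.add_le_add_right (hc₂ (len x + 1)) c₁))
  have := two_mul_len_le (len x + 1)
  omega

theorem exists_le_and_lt_solovay {j : ℕ} (hfin : {i | K i ≤ j}.Finite)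
    (hne : {i | K i ≤ j}.Nonempty) : ∃ x, K x ≤ j ∧ j < solovay K x := by
  refine ⟨sSup {i | K i ≤ j}, Nat.sSup_mem hne hfin.bddAbove, ?_⟩
  obtain ⟨i, hi, heq⟩ := exists_lt_and_eq_solovay K (sSup {i | K i ≤ j})
  rw [← heq]
  by_contra! h
  exact hi.not_ge (le_csSup hfin.bddAbove h)

end Solovay

theorem upperSemicomputable_of_le_of_exists_eq {A : ℕ → ℕ} {g : ℕ → ℕ → ℕ}
    (hg : Computable₂ g) (hle : ∀ x t, A x ≤ g x t) (hex : ∀ x, ∃ t, g x t = A x) :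
    UpperSemicomputable A := by
  let F : ℕ → ℕ → ℕ := fun x s => Nat.rec (g x 0) (fun n m => min m (g x (n + 1))) s
  have hF : ∀ x t, F x t ≤ g x t := fun x t => by
    cases t
    · exact le_rfl
    · exact min_le_right _ _
  refine ⟨F, ?_, fun x => antitone_nat_of_succ_le fun n => min_le_left _ _, fun x => ?_⟩
  · exact Computable.nat_rec Computable.snd (hg.comp Computable.fst (Computable.const 0))
      ((Primrec.nat_min.to_comp.comp (Computable.snd.comp Computable.snd)
        (hg.comp (Computable.fst.comp Computable.fst)
          (Computable.succ.comp (Computable.fst.comp Computable.snd)))).to₂)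
  · obtain ⟨t, ht⟩ := hex x
    refine le_antisymm (le_ciInf fun s => ?_)
      (ciInf_le_of_le (OrderBot.bddBelow _) t (ht ▸ hF x t))
    induction s with
    | zero => exact hle x 0
    | succ n ih => exact le_min ih (hle x (n + 1))

noncomputable def inflatedCplx (x : ℕ) : ℕ :=
  max (MachineCplx V x) (2 * solovay (MachineCplx V) x)

theorem stableUnderComputable_inflatedCplx : StableUnderComputable inflatedCplx := by
  intro f hf
  obtain ⟨c₁, h₁⟩ := stableUnderComputable_machineCplx_V f hf
  obtain ⟨c₂, h₂⟩ := stableUnderComputable_solovay stableUnderComputable_machineCplx_V f hf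
  refine ⟨c₁ + 2 * c₂, fun x => ?_⟩
  have := h₁ x
  have := h₂ x
  simp only [inflatedCplx]
  omega

theorem exists_inflatedCplx_le_len : ∃ c, ∀ x, inflatedCplx x ≤ len x + c := by
  obtain ⟨c₁, h₁⟩ := exists_machineCplx_V_le_len
  obtain ⟨c₂, h₂⟩ := stableUnderComputable_machineCplx_V.exists_two_mul_solovay_le_len
    ⟨c₁, h₁⟩
  refine ⟨c₁ + c₂, fun x => ?_⟩
  have := h₁ x
  have := h₂ x
  simp only [inflatedCplx]
  omega

theorem finite_and_ncard_setOf_inflatedCplx_le (n : ℕ) :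
    {x | inflatedCplx x ≤ n}.Finite ∧ {x | inflatedCplx x ≤ n}.ncard ≤ 2 * 2 ^ n := by
  have hsub : {x | inflatedCplx x ≤ n} ⊆ shortOutputs V n := fun x hx =>
    setOf_machineCplx_V_le_subset n (show MachineCplx V x ≤ n from (le_max_left _ _).trans hx)
  exact ⟨(finite_shortOutputs V n).subset hsub,
    (ncard_le_ncard hsub (finite_shortOutputs V n)).trans
      (pow_succ' 2 n ▸ ncard_shortOutputs_le V n)⟩

theorem exists_machineCplx_V_add_lt_inflatedCplx (b : ℕ) :
    ∃ x, MachineCplx V x + b < inflatedCplx x := by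
  set j := MachineCplx V 0 + b
  have hfin : {i | MachineCplx V i ≤ j}.Finite :=
    (finite_shortOutputs V j).subset (setOf_machineCplx_V_le_subset j)
  obtain ⟨x, hxj, hjx⟩ := exists_le_and_lt_solovay hfin ⟨0, by simp [j]⟩
  refine ⟨x, ?_⟩
  have : 2 * solovay (MachineCplx V) x ≤ inflatedCplx x := le_max_right _ _
  omega

/-- The bound on `inflatedCplx x` certified by `k`-step runs of a program `y₁` printing `x` and
a program `y₂` printing a number beyond `x`. -/
def stageBound (c x y₁ y₂ k : ℕ) : ℕ :=
  if Vstage k y₁ = some x ∧ x < (Vstage k y₂).getD 0 then max (len y₁) (2 * len y₂)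
  else len x + c

theorem inflatedCplx_le_stageBound {c : ℕ} (hc : ∀ x, inflatedCplx x ≤ len x + c)
    (x y₁ y₂ k : ℕ) : inflatedCplx x ≤ stageBound c x y₁ y₂ k := by
  unfold stageBound
  split_ifs with h
  · obtain ⟨h₁, h₂⟩ := h
    obtain ⟨i, hi⟩ : ∃ i, Vstage k y₂ = some i := Option.ne_none_iff_exists'.mp
      fun hnone => by simp [hnone] at h₂
    rw [hi, Option.getD_some] at h₂
    exact max_le_max (machineCplx_le (mem_V_of_mem_Vstage h₁))
      (Nat.mul_le_mul_left 2 ((solovay_le h₂).trans (machineCplx_le (mem_V_of_mem_Vstage hi))))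
  · exact hc x

theorem exists_stageBound_eq (c x : ℕ) :
    ∃ y₁ y₂ k, stageBound c x y₁ y₂ k = inflatedCplx x := by
  obtain ⟨y₁, hy₁, hxy₁⟩ := exists_len_eq_machineCplx_V x
  obtain ⟨i, hxi, hi⟩ := exists_lt_and_eq_solovay (MachineCplx V) x
  obtain ⟨y₂, hy₂, hiy₂⟩ := exists_len_eq_machineCplx_V i
  obtain ⟨k₁, hk₁⟩ := exists_mem_Vstage hxy₁
  obtain ⟨k₂, hk₂⟩ := exists_mem_Vstage hiy₂
  refine ⟨y₁, y₂, max k₁ k₂, ?_⟩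
  have h₁ : Vstage (max k₁ k₂) y₁ = some x := Vstage_mono (le_max_left _ _) hk₁
  have h₂ : Vstage (max k₁ k₂) y₂ = some i := Vstage_mono (le_max_right _ _) hk₂
  rw [stageBound, if_pos ⟨h₁, by rw [h₂]; exact hxi⟩, hy₁, hy₂, hi, inflatedCplx]

theorem primrec_stageBound (c : ℕ) :
    Primrec fun p : ℕ × ℕ × ℕ × ℕ => stageBound c p.1 p.2.1 p.2.2.1 p.2.2.2 := by
  have hy₁ : Primrec fun p : ℕ × ℕ × ℕ × ℕ => p.2.1 := Primrec.fst.comp Primrec.snd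
  have hy₂ : Primrec fun p : ℕ × ℕ × ℕ × ℕ => p.2.2.1 :=
    Primrec.fst.comp (Primrec.snd.comp Primrec.snd)
  have hk : Primrec fun p : ℕ × ℕ × ℕ × ℕ => p.2.2.2 :=
    Primrec.snd.comp (Primrec.snd.comp Primrec.snd)
  refine Primrec.ite (PrimrecPred.and ?_ ?_) ?_ ?_
  · exact Primrec.eq.comp (primrec_Vstage.comp hk hy₁) (Primrec.option_some.comp Primrec.fst)
  · exact Primrec.nat_lt.comp Primrec.fst
      (Primrec.option_getD.comp (primrec_Vstage.comp hk hy₂) (Primrec.const 0))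
  · exact Primrec.nat_max.comp (primrec_len.comp hy₁)
      (Primrec.nat_mul.comp (Primrec.const 2) (primrec_len.comp hy₂))
  · exact Primrec.nat_add.comp (primrec_len.comp Primrec.fst) (Primrec.const c)

theorem upperSemicomputable_inflatedCplx : UpperSemicomputable inflatedCplx := by
  obtain ⟨c, hc⟩ := exists_inflatedCplx_le_len
  let decodeTriple (t : ℕ) : ℕ × ℕ × ℕ :=
    (t.unpair.1, t.unpair.2.unpair.1, t.unpair.2.unpair.2)
  refine upperSemicomputable_of_le_of_exists_eq
    (g := fun x t => stageBound c x (decodeTriple t).1 (decodeTriple t).2.1 (decodeTriple t).2.2)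
    ?_ (fun x t => inflatedCplx_le_stageBound hc x _ _ _) fun x => ?_
  · have hdec : Primrec decodeTriple :=
      (Primrec.fst.comp Primrec.unpair).pair ((Primrec.fst.comp (Primrec.unpair.comp
        (Primrec.snd.comp Primrec.unpair))).pair
        (Primrec.snd.comp (Primrec.unpair.comp (Primrec.snd.comp Primrec.unpair))))
    exact ((primrec_stageBound c).comp (Primrec.fst.pair (hdec.comp Primrec.snd))).to_comp
  · obtain ⟨y₁, y₂, k, h⟩ := exists_stageBound_eq c x
    exact ⟨Nat.pair y₁ (Nat.pair y₂ k), by simpa [decodeTriple] using h⟩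

end KC

open KC

open KC

/-- Shen's stability axiom cannot be weakened to total computable functions. -/
theorem total_stability_insufficient (U : ℕ →. ℕ) (hU : Optimal U) :
    ∃ A : ℕ → ℕ,
      UpperSemicomputable A ∧
      (∀ f : ℕ → ℕ, Computable f → ∃ c, ∀ x, A (f x) ≤ A x + c) ∧
      (∃ c, ∀ x, A x ≤ len x + c) ∧
      (∃ c, ∀ n, {x | A x ≤ n}.Finite ∧ {x | A x ≤ n}.ncard ≤ c * 2 ^ n) ∧
      ¬ (∃ c, ∀ x, A x ≤ MachineCplx U x + c ∧ MachineCplx U x ≤ A x + c) := by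
  refine ⟨inflatedCplx, upperSemicomputable_inflatedCplx, stableUnderComputable_inflatedCplx,
    exists_inflatedCplx_le_len, ⟨2, finite_and_ncard_setOf_inflatedCplx_le⟩, ?_⟩
  rintro ⟨c, hc⟩
  obtain ⟨c', hc'⟩ := hU.exists_machineCplx_le_s9 partrec_V exists_mem_V
  obtain ⟨x, hx⟩ := exists_machineCplx_V_add_lt_inflatedCplx (c + c')
  have := hc' x
  have := (hc x).1
  omega
end

section
/- For every total computable function f : ℕ → ℕ (not necessarily monotone), α(f(n)) ≤ α(n) + O(1), where α(n) = min{K(i) : i > n}. -/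
open Set Filter

open KC

private lemma solovay_le_of_lt {K : ℕ → ℕ} {n j : ℕ} (h : n < j) : solovay K n ≤ K j :=
  Nat.sInf_le ⟨j, h, rfl⟩

/-- `α` is stable under every total computable function. -/
theorem solovay_total_stable (U' : ℕ →. ℕ) (hU' : PrefixOptimal U') :
    ∀ f : ℕ → ℕ, Computable f →
      ∃ c, ∀ n, solovay (MachineCplx U') (f n) ≤ solovay (MachineCplx U') n + c := by
  intro f hf
  classical
  set K : ℕ → ℕ := MachineCplx U' with hKdef
  -- the monotone envelope of `f`
  set h : ℕ → ℕ := fun n => Nat.rec (f 0) (fun y IH => max IH (f (y + 1))) n with hhdef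
  have hmono : Monotone h := monotone_nat_of_le_succ fun n => le_max_left _ _
  have hfh : ∀ n, f n ≤ h n := by
    intro n
    cases n with
    | zero => exact le_refl _
    | succ m => exact le_max_right _ _
  have hcomp : Computable h := by
    have : Computable fun a : ℕ =>
        Nat.rec (motive := fun _ => ℕ) (f 0) (fun y IH => (fun (_ : ℕ) (p : ℕ × ℕ) =>
          max p.2 (f (p.1 + 1))) a (y, IH)) a :=
      Computable.nat_rec Computable.id (Computable.const (f 0))
        ((Primrec.nat_max.to_comp.comp
            (Computable.snd.comp Computable.snd)
            (hf.comp (Computable.succ.comp (Computable.fst.comp Computable.snd)))).to₂)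
    exact this.of_eq fun n => rfl
  -- the machine `T p = h (U' p) + 1`
  set T : ℕ →. ℕ := fun p => (U' p).map (fun i => h i + 1) with hTdef
  have hT : Partrec T :=
    hU'.1.map ((Computable.succ.comp (hcomp.comp Computable.snd)).to₂)
  have hTpf : PrefixFree T := by
    intro y z hy hz hyz
    exact hU'.2.1 y z hy hz hyz
  obtain ⟨c1, hc1⟩ := hU'.2.2 T hT hTpf
  -- the set of outputs with no program
  set D : Set ℕ := {i | ¬ ({m | ∃ y, len y = m ∧ i ∈ U' y}).Nonempty} with hDdef
  by_cases hD : D.Infinite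
  · refine ⟨0, fun n => ?_⟩
    obtain ⟨i, hiD, hgt⟩ := hD.exists_gt (f n)
    have hKi : K i = 0 := by
      have he : {m | ∃ y, len y = m ∧ i ∈ U' y} = ∅ :=
        Set.not_nonempty_iff_eq_empty.mp hiD
      show sInf {m | ∃ y, len y = m ∧ i ∈ U' y} = 0
      rw [he, Nat.sInf_empty]
    have := solovay_le_of_lt (K := K) hgt
    omega
  · have hfin : D.Finite := Set.not_infinite.mp hD
    obtain ⟨N, hN⟩ := hfin.bddAbove
    set c2 : ℕ := Finset.sup (Finset.range (N + 1)) (fun n => solovay K (f n)) with hc2def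
    refine ⟨c1 + c2, fun n => ?_⟩
    have hne : {m | ∃ i, n < i ∧ K i = m}.Nonempty := ⟨K (n + 1), n + 1, Nat.lt_succ_self n, rfl⟩
    obtain ⟨i, hni, hKi⟩ := Nat.sInf_mem hne
    by_cases hiD : i ∈ D
    · have hnN : n < N + 1 := by
        have : i ≤ N := hN hiD
        omega
      have h1 : solovay K (f n) ≤ c2 :=
        Finset.le_sup (f := fun n => solovay K (f n)) (Finset.mem_range.mpr hnN)
      omega
    · have hne2 : ({m | ∃ y, len y = m ∧ i ∈ U' y}).Nonempty := not_not.mp hiD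
      obtain ⟨p, hlen, hp⟩ := Nat.sInf_mem hne2
      have hlenK : len p = K i := hlen
      have hmemT : (h i + 1) ∈ T p := Part.mem_map _ hp
      have hb : MachineCplx U' (h i + 1) ≤ len p + c1 := hc1 _ p hmemT
      have hlt : f n < h i + 1 := by
        have h1 : f n ≤ h n := hfh n
        have h2 : h n ≤ h i := hmono (le_of_lt hni)
        omega
      have h3 : solovay K (f n) ≤ K (h i + 1) := solovay_le_of_lt hlt
      have h4 : K (h i + 1) ≤ len p + c1 := hb
      have : solovay K n = K i := hKi.symm
      omega
end

section
/- Let f be a sub-linear order (total, non-decreasing, unbounded, with f(n) = o(n)), let p_f = max{n : f(n) ≥ n}, and define f*(n) = min{k : f^{(k)}(n) ≤ p_f} (k-fold iteration). Then f* is itself a sub-linear order. -/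
open Set Filter

/-!
Sub-linearity gives `2 f(n) < n` for large `n`, so `p_f` exists and `f(n) < n` above it; hence
`f*` is well defined and `f*(n) = f*(f n) + 1` for `n > p_f`. With `f → ∞` this recursion makes
`f*` unbounded, and since `f` at least halves its argument above some `N`, it also gives
`f*(n) ≤ f*(N) + log₂ n + 1 = o(n)`.
-/

open Asymptotics

namespace KC

variable {f g : ℕ → ℕ}

theorem IsOrder.tendsto_atTop (hf : IsOrder f) : Tendsto f atTop atTop :=
  hf.1.tendsto_atTop_atTop hf.2

theorem isOrder_of_monotone_of_tendsto (hm : Monotone f) (ht : Tendsto f atTop atTop) :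
    IsOrder f :=
  ⟨hm, fun m => (tendsto_atTop.1 ht m).exists⟩

theorem Sublinear.eventually_two_mul_lt (hs : Sublinear f) : ∀ᶠ n in atTop, 2 * f n < n := by
  filter_upwards [hs.eventually (gt_mem_nhds one_half_pos), eventually_gt_atTop 0] with n hlt hn
  have hn' : (0 : ℝ) < n := by exact_mod_cast hn
  rw [div_lt_iff₀ hn'] at hlt
  exact_mod_cast (by linarith : (2 * f n : ℝ) < n)

theorem sublinear_of_le_isLittleO {u : ℕ → ℝ} (hu : u =o[atTop] fun n => (n : ℝ))
    (hg : ∀ᶠ n in atTop, (g n : ℝ) ≤ u n) : Sublinear g := by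
  refine tendsto_of_tendsto_of_tendsto_of_le_of_le' tendsto_const_nhds hu.tendsto_div_nhds_zero
    (Eventually.of_forall fun n => by positivity) ?_
  filter_upwards [hg] with n hn
  exact div_le_div_of_nonneg_right hn n.cast_nonneg

theorem Sublinear.lt_self_of_pstar_lt (hs : Sublinear f) {n : ℕ} (hn : pstar f < n) :
    f n < n := by
  obtain ⟨N, hN⟩ := eventually_atTop.1 hs.eventually_two_mul_lt
  have hbdd : BddAbove {n | n ≤ f n} := ⟨N, fun m hm => by
    by_contra! hNm
    have hm : m ≤ f m := hm
    have := hN m hNm.le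
    omega⟩
  exact not_le.1 fun hle => hn.not_ge (le_csSup hbdd hle)

theorem iterate_starOp_le_pstar (hs : Sublinear f) (n : ℕ) : f^[starOp f n] n ≤ pstar f := by
  refine Nat.sInf_mem (s := {k | f^[k] n ≤ pstar f}) ?_
  induction n using Nat.strong_induction_on with
  | _ n ih =>
    rcases le_or_gt n (pstar f) with hle | hlt
    · exact ⟨0, hle⟩
    · obtain ⟨k, hk⟩ := ih (f n) (hs.lt_self_of_pstar_lt hlt)
      exact ⟨k + 1, hk⟩

theorem starOp_le_starOp_apply_add_one (hs : Sublinear f) (n : ℕ) :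
    starOp f n ≤ starOp f (f n) + 1 :=
  Nat.sInf_le (iterate_starOp_le_pstar hs (f n))

theorem starOp_eq_starOp_apply_add_one (hs : Sublinear f) {n : ℕ} (hn : pstar f < n) :
    starOp f n = starOp f (f n) + 1 := by
  have hpos : 1 ≤ starOp f n := Nat.one_le_iff_ne_zero.2 fun h0 => by
    have := iterate_starOp_le_pstar hs n
    rw [h0] at this
    exact hn.not_ge this
  exact (Nat.sInf_add hpos).symm

theorem starOp_mono (hs : Sublinear f) (hm : Monotone f) : Monotone (starOp f) := fun _ n hmn =>
  Nat.sInf_le ((hm.iterate _ hmn).trans (iterate_starOp_le_pstar hs n))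

theorem tendsto_starOp_atTop (hs : Sublinear f) (hf : Tendsto f atTop atTop) :
    Tendsto (starOp f) atTop atTop := by
  refine tendsto_atTop.2 fun k => ?_
  induction k with
  | zero => exact Eventually.of_forall fun _ => Nat.zero_le _
  | succ k ih =>
    filter_upwards [hf.eventually ih, eventually_gt_atTop (pstar f)] with n hk hn
    rw [starOp_eq_starOp_apply_add_one hs hn]
    omega

theorem starOp_le_add_of_lt_mul_pow (hs : Sublinear f) (hm : Monotone f) {N : ℕ}
    (hN : ∀ n, N < n → 2 * f n < n) (k : ℕ) :
    ∀ n < (N + 1) * 2 ^ k, starOp f n ≤ starOp f N + k := by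
  induction k with
  | zero => exact fun n hn => starOp_mono hs hm (by omega)
  | succ k ih =>
    intro n hn
    rcases le_or_gt n N with hle | hlt
    · exact (starOp_mono hs hm hle).trans (Nat.le_add_right _ _)
    · have hfn : f n < (N + 1) * 2 ^ k := by
        have := hN n hlt
        rw [pow_succ, ← mul_assoc] at hn
        omega
      have := starOp_le_starOp_apply_add_one hs n
      have := ih (f n) hfn
      omega

theorem starOp_le_add_log (hs : Sublinear f) (hm : Monotone f) :
    ∃ C, ∀ n, starOp f n ≤ C + Nat.log 2 n := by
  obtain ⟨N, hN⟩ := eventually_atTop.1 hs.eventually_two_mul_lt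
  refine ⟨starOp f N + 1, fun n => ?_⟩
  have hn : n < (N + 1) * 2 ^ (Nat.log 2 n + 1) :=
    (Nat.lt_pow_succ_log_self one_lt_two n).trans_le (Nat.le_mul_of_pos_left _ N.succ_pos)
  have := starOp_le_add_of_lt_mul_pow hs hm (fun n hn => hN n hn.le) _ n hn
  omega

theorem sublinear_of_le_add_log {C : ℕ} (hg : ∀ n, g n ≤ C + Nat.log 2 n) : Sublinear g := by
  have hu : (fun x : ℝ => (C : ℝ) + Real.logb 2 x) =o[atTop] id :=
    (isLittleO_const_id_atTop _).add Real.isLittleO_logb_id_atTop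
  refine sublinear_of_le_isLittleO (hu.comp_tendsto tendsto_natCast_atTop_atTop)
    (Eventually.of_forall fun n => ?_)
  calc (g n : ℝ) ≤ C + Nat.log 2 n := by exact_mod_cast hg n
    _ ≤ C + Real.logb 2 n := by gcongr; exact Real.natLog_le_logb n 2

end KC

open KC
/-- The star-operator of a sub-linear order is again a sub-linear order. -/
theorem starOp_sublinear_order (f : ℕ → ℕ) (hf : IsOrder f) (hs : Sublinear f) :
    IsOrder (starOp f) ∧ Sublinear (starOp f) := by
  obtain ⟨C, hC⟩ := starOp_le_add_log hs hf.1
  exact ⟨isOrder_of_monotone_of_tendsto (starOp_mono hs hf.1)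
    (tendsto_starOp_atTop hs hf.tendsto_atTop), sublinear_of_le_add_log hC⟩
end
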